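/- Let {x^k} be generated by the Newton-type proximal gradient method: x^{k+1} = x^k + α_k d^k, where d^k is the unique global minimizer of d ↦ Q(x^k,d), t^k = Q(x^k,d^k), and α_k is the largest element of {1, r, r², …} (r ∈ (0,1)) satisfying F_j(x^k + α_k d^k) ≤ F_j(x^k) + β α_k t^k for all j = 1,…,m, with β ∈ (0,1). Suppose each f_j is σ-strongly convex (σ > 0), each ∇f_j is Lipschitz continuous with constant L, and the level set M = {x ∈ ℝⁿ : F_j(x) ≤ F_j(x^0) for all j} is bounded. Then every accumulation point of {x^k} is a critical point of the multi-objective problem min (F_1,…,F_m). -/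

import Mathlib

open Filter Topology Finset
open scoped RealInnerProductSpace

noncomputable section

/-- One-sided directional derivative: `c = F'(x; d) = lim_{α→0⁺} (F(x+αd) − F(x))/α`. -/
def HasDirDeriv {n : ℕ} (F : EuclideanSpace ℝ (Fin n) → ℝ)
    (x d : EuclideanSpace ℝ (Fin n)) (c : ℝ) : Prop :=
  Filter.Tendsto (fun α : ℝ => (F (x + α • d) - F x) / α) (nhdsWithin 0 (Set.Ioi 0)) (nhds c)

/-- Subdifferential of a convex function: `∂h(x) = {ξ : h(y) ≥ h(x) + ⟪ξ, y − x⟫ ∀ y}`. -/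
def subdiff {n : ℕ} (h : EuclideanSpace ℝ (Fin n) → ℝ) (x : EuclideanSpace ℝ (Fin n)) :
    Set (EuclideanSpace ℝ (Fin n)) :=
  {ξ | ∀ y, h x + ⟪ξ, y - x⟫ ≤ h y}

/-- `σ`-strong convexity: `f(αx+(1−α)y) ≤ αf(x)+(1−α)f(y) − (σ/2)α(1−α)‖x−y‖²`. -/
def StronglyConvexFun {n : ℕ} (σ : ℝ) (f : EuclideanSpace ℝ (Fin n) → ℝ) : Prop :=
  ∀ x y : EuclideanSpace ℝ (Fin n), ∀ α : ℝ, 0 ≤ α → α ≤ 1 →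
    f (α • x + (1 - α) • y) ≤ α * f x + (1 - α) * f y - σ / 2 * α * (1 - α) * ‖x - y‖ ^ 2

/-- `Q_j(x,d) = ∇f_j(x)ᵀd + ½ dᵀ∇²f_j(x)d + g_j(x+d) − g_j(x)`, where the Hessian is
the Fréchet derivative of the gradient. -/
def Qj {n m : ℕ} (f g : Fin (m + 1) → EuclideanSpace ℝ (Fin n) → ℝ)
    (j : Fin (m + 1)) (x d : EuclideanSpace ℝ (Fin n)) : ℝ :=
  ⟪gradient (f j) x, d⟫ + (1 / 2) * ⟪(fderiv ℝ (gradient (f j)) x) d, d⟫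
    + g j (x + d) - g j x

/-- `Q(x,d) = max_{1 ≤ j ≤ m} Q_j(x,d)`. -/
def Qmax {n m : ℕ} (f g : Fin (m + 1) → EuclideanSpace ℝ (Fin n) → ℝ)
    (x d : EuclideanSpace ℝ (Fin n)) : ℝ :=
  Finset.univ.sup' Finset.univ_nonempty (fun j => Qj f g j x d)

/-! Strong convexity of each `f_j` makes `d ↦ Q(x,d)` strongly convex with `Q(x,0) = 0`, so the
optimal value `t = Q(x,d(x))` satisfies `t ≤ -(σ/2)‖d(x)‖²`. Together with the descent lemma for
`L`-smooth functions this shows that the Armijo test passes for every step `s ≤ σ(2-β)/L`, so the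
backtracking steps are bounded below by `min 1 (rσ(2-β)/L)`. Hence `F_1(x^k)` decreases; it
converges along the subsequence, so `α_k t_k → 0` and therefore `t_k → 0`. Since `t_k ≤ Q(x^k,d)`
for every `d` and `Q` is continuous in `x`, we get `Q(x*,d) ≥ 0` for all `d`, and
`Q_j(x*,sd)/s → F_j'(x*;d)` as `s → 0⁺` turns this into criticality of `x*`. -/

section Calculus

variable {E : Type*} [NormedAddCommGroup E] [InnerProductSpace ℝ E]

theorem le_inner_fderiv_apply_self {G : E → E} {x : E} {σ : ℝ} (hG : DifferentiableAt ℝ G x)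
    (hmono : ∀ y, σ * ‖y - x‖ ^ 2 ≤ ⟪G y - G x, y - x⟫) (d : E) :
    σ * ‖d‖ ^ 2 ≤ ⟪fderiv ℝ G x d, d⟫ := by
  have hlim : Tendsto (fun t : ℝ => ⟪t⁻¹ • (G (x + t • d) - G x), d⟫) (𝓝[>] 0)
      (𝓝 ⟪fderiv ℝ G x d, d⟫) :=
    (hG.hasFDerivAt.hasLineDerivAt d).tendsto_slope_zero_right.inner tendsto_const_nhds
  refine ge_of_tendsto hlim ?_
  filter_upwards [self_mem_nhdsWithin] with t (ht : 0 < t)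
  have h := hmono (x + t • d)
  rw [add_sub_cancel_left, norm_smul, real_inner_smul_right, Real.norm_of_nonneg ht.le] at h
  rw [real_inner_smul_left, le_inv_mul_iff₀ ht]
  exact le_of_mul_le_mul_left (by linarith) ht

variable [CompleteSpace E]

theorem ContDiff.gradient {f : E → ℝ} {k l : WithTop ℕ∞} (hf : ContDiff ℝ k f) (hlk : l + 1 ≤ k) :
    ContDiff ℝ l (gradient f) :=
  (InnerProductSpace.toDual ℝ E).symm.contDiff.comp (hf.fderiv_right hlk)

theorem apply_add_smul_le_of_lipschitz_gradient {f : E → ℝ} {L : ℝ} (hf : Differentiable ℝ f)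
    (hLip : ∀ y z, ‖gradient f y - gradient f z‖ ≤ L * ‖y - z‖) (x d : E) {s : ℝ} (hs : 0 ≤ s) :
    f (x + s • d) ≤ f x + s * ⟪gradient f x, d⟫ + L / 2 * s ^ 2 * ‖d‖ ^ 2 := by
  have hline : ∀ t : ℝ, HasDerivAt (fun t : ℝ => f (x + t • d)) ⟪gradient f (x + t • d), d⟫ t := by
    intro t
    rw [inner_gradient_left]
    exact (hf _).hasFDerivAt.comp_hasDerivAt t
      (by simpa using ((hasDerivAt_id t).smul_const d).const_add x)
  have hbound : ∀ t, 0 ≤ t →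
      ⟪gradient f (x + t • d), d⟫ ≤ ⟪gradient f x, d⟫ + L * t * ‖d‖ ^ 2 := by
    intro t ht
    have hLt := hLip (x + t • d) x
    rw [add_sub_cancel_left, norm_smul, Real.norm_of_nonneg ht] at hLt
    have := real_inner_le_norm (gradient f (x + t • d) - gradient f x) d
    rw [inner_sub_left] at this
    nlinarith [mul_le_mul_of_nonneg_right hLt (norm_nonneg d)]
  have hB : ∀ t : ℝ,
      HasDerivAt (fun t : ℝ => f x + t * ⟪gradient f x, d⟫ + L / 2 * t ^ 2 * ‖d‖ ^ 2)
        (⟪gradient f x, d⟫ + L * t * ‖d‖ ^ 2) t := fun t =>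
    ((((hasDerivAt_id t).mul_const ⟪gradient f x, d⟫).const_add (f x)).add
      (((hasDerivAt_pow 2 t).const_mul (L / 2)).mul_const (‖d‖ ^ 2))).congr_deriv
      (by push_cast; ring)
  refine image_le_of_deriv_right_le_deriv_boundary
    (fun t _ => (hline t).continuousAt.continuousWithinAt) (fun t _ => (hline t).hasDerivWithinAt)
    (by simp) (fun t _ => (hB t).continuousAt.continuousWithinAt)
    (fun t _ => (hB t).hasDerivWithinAt) (fun t ht => hbound t ht.1) ⟨hs, le_rfl⟩

end Calculus

theorem DifferentiableAt.hasDirDeriv {n : ℕ} {f : EuclideanSpace ℝ (Fin n) → ℝ}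
    {x : EuclideanSpace ℝ (Fin n)} (hf : DifferentiableAt ℝ f x) (d : EuclideanSpace ℝ (Fin n)) :
    HasDirDeriv f x d ⟪gradient f x, d⟫ := by
  rw [HasDirDeriv, inner_gradient_left]
  simpa [div_eq_inv_mul] using (hf.hasFDerivAt.hasLineDerivAt d).tendsto_slope_zero_right

theorem ConvexOn.apply_add_smul_le {V : Type*} [AddCommMonoid V] [Module ℝ V] {g : V → ℝ}
    (hg : ConvexOn ℝ Set.univ g) (x d : V) {a : ℝ} (ha0 : 0 ≤ a) (ha1 : a ≤ 1) :
    g (x + a • d) ≤ a * g (x + d) + (1 - a) * g x := by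
  have h := hg.2 (Set.mem_univ (x + d)) (Set.mem_univ x) ha0 (sub_nonneg.2 ha1) (by ring)
  rwa [show a • (x + d) + (1 - a) • x = x + a • d by module, smul_eq_mul, smul_eq_mul] at h

namespace StronglyConvexFun

variable {n : ℕ} {σ : ℝ} {f : EuclideanSpace ℝ (Fin n) → ℝ}

theorem inner_gradient_le (hsc : StronglyConvexFun σ f) {x : EuclideanSpace ℝ (Fin n)}
    (hf : DifferentiableAt ℝ f x) (y : EuclideanSpace ℝ (Fin n)) :
    ⟪gradient f x, y - x⟫ ≤ f y - f x - σ / 2 * ‖y - x‖ ^ 2 := by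
  have hlim : Tendsto (fun a : ℝ => f y - f x - σ / 2 * (1 - a) * ‖y - x‖ ^ 2) (𝓝[>] 0)
      (𝓝 (f y - f x - σ / 2 * ‖y - x‖ ^ 2)) := by
    have : ContinuousAt (fun a : ℝ => f y - f x - σ / 2 * (1 - a) * ‖y - x‖ ^ 2) 0 := by fun_prop
    simpa using this.continuousWithinAt.tendsto
  refine le_of_tendsto_of_tendsto (hf.hasDirDeriv (y - x)) hlim ?_
  filter_upwards [Ioo_mem_nhdsGT (zero_lt_one' ℝ)] with a ha
  have h := hsc y x a ha.1.le ha.2.le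
  rw [show a • y + (1 - a) • x = x + a • (y - x) by module] at h
  rw [div_le_iff₀ ha.1]
  nlinarith

theorem inner_gradient_sub_ge (hsc : StronglyConvexFun σ f) (hf : Differentiable ℝ f)
    (x y : EuclideanSpace ℝ (Fin n)) :
    σ * ‖y - x‖ ^ 2 ≤ ⟪gradient f y - gradient f x, y - x⟫ := by
  have hxy := hsc.inner_gradient_le (hf x) y
  have hyx := hsc.inner_gradient_le (hf y) x
  rw [← neg_sub y x, inner_neg_right, norm_neg] at hyx
  rw [inner_sub_left]
  linarith

theorem le_inner_hessian (hsc : StronglyConvexFun σ f) (hf : ContDiff ℝ 2 f)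
    (x d : EuclideanSpace ℝ (Fin n)) :
    σ * ‖d‖ ^ 2 ≤ ⟪fderiv ℝ (gradient f) x d, d⟫ :=
  le_inner_fderiv_apply_self ((hf.gradient le_rfl).differentiable one_ne_zero x)
    (hsc.inner_gradient_sub_ge (hf.differentiable two_ne_zero) x) d

end StronglyConvexFun

section Subproblem

variable {n m : ℕ} {f g F : Fin (m + 1) → EuclideanSpace ℝ (Fin n) → ℝ} {σ L : ℝ}

theorem Qmax_zero (x : EuclideanSpace ℝ (Fin n)) : Qmax f g x 0 = 0 := by
  simp [Qmax, Qj]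

theorem Qj_le_Qmax (j : Fin (m + 1)) (x d : EuclideanSpace ℝ (Fin n)) :
    Qj f g j x d ≤ Qmax f g x d :=
  Finset.le_sup' (fun j => Qj f g j x d) (Finset.mem_univ j)

theorem Qj_smul_le {j : Fin (m + 1)} (hsc : StronglyConvexFun σ (f j)) (hf : ContDiff ℝ 2 (f j))
    (hg : ConvexOn ℝ Set.univ (g j)) (x d : EuclideanSpace ℝ (Fin n)) {a : ℝ} (ha0 : 0 ≤ a)
    (ha1 : a ≤ 1) :
    Qj f g j x (a • d) ≤ a * Qj f g j x d - σ / 2 * a * (1 - a) * ‖d‖ ^ 2 := by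
  have hH := hsc.le_inner_hessian hf x d
  have hgd := hg.apply_add_smul_le x d ha0 ha1
  simp only [Qj, map_smul, real_inner_smul_left, real_inner_smul_right]
  nlinarith [mul_nonneg ha0 (sub_nonneg.2 ha1)]

theorem Qmax_le_neg_of_isMin (hsc : ∀ j, StronglyConvexFun σ (f j))
    (hf : ∀ j, ContDiff ℝ 2 (f j)) (hg : ∀ j, ConvexOn ℝ Set.univ (g j))
    {x d : EuclideanSpace ℝ (Fin n)} (hmin : ∀ d', Qmax f g x d ≤ Qmax f g x d') :
    Qmax f g x d ≤ -(σ / 2 * ‖d‖ ^ 2) := by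
  have hsmul : ∀ a : ℝ, 0 ≤ a → a ≤ 1 →
      Qmax f g x (a • d) ≤ a * Qmax f g x d - σ / 2 * a * (1 - a) * ‖d‖ ^ 2 := fun a ha0 ha1 =>
    Finset.sup'_le _ _ fun j _ => (Qj_smul_le (hsc j) (hf j) (hg j) x d ha0 ha1).trans
      (by gcongr; exact Qj_le_Qmax j x d)
  have hlim :
      Tendsto (fun a : ℝ => -(σ / 2 * a * ‖d‖ ^ 2)) (𝓝[<] 1) (𝓝 (-(σ / 2 * ‖d‖ ^ 2))) := by
    have : ContinuousAt (fun a : ℝ => -(σ / 2 * a * ‖d‖ ^ 2)) 1 := by fun_prop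
    simpa using this.continuousWithinAt.tendsto
  refine ge_of_tendsto hlim ?_
  filter_upwards [Ioo_mem_nhdsLT (zero_lt_one' ℝ)] with a ha
  have h := (hmin (a • d)).trans (hsmul a ha.1.le ha.2.le)
  nlinarith [ha.1, ha.2]

theorem apply_add_smul_le_of_Qmax (hF : ∀ j y, F j y = f j y + g j y)
    (hsc : ∀ j, StronglyConvexFun σ (f j)) (hf : ∀ j, ContDiff ℝ 2 (f j))
    (hLip : ∀ j y z, ‖gradient (f j) y - gradient (f j) z‖ ≤ L * ‖y - z‖)
    (hg : ∀ j, ConvexOn ℝ Set.univ (g j)) (x d : EuclideanSpace ℝ (Fin n)) {s : ℝ} (hs0 : 0 ≤ s)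
    (hs1 : s ≤ 1) (j : Fin (m + 1)) :
    F j (x + s • d) ≤
      F j x + s * Qmax f g x d - s * (σ / 2) * ‖d‖ ^ 2 + L / 2 * s ^ 2 * ‖d‖ ^ 2 := by
  have hfd := apply_add_smul_le_of_lipschitz_gradient ((hf j).differentiable two_ne_zero)
    (hLip j) x d hs0
  have hgd := (hg j).apply_add_smul_le x d hs0 hs1
  have hH := (hsc j).le_inner_hessian (hf j) x d
  have hQ := Qj_le_Qmax (f := f) (g := g) j x d
  rw [Qj] at hQ
  rw [hF, hF]
  nlinarith

theorem armijo_of_le (hF : ∀ j y, F j y = f j y + g j y)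
    (hsc : ∀ j, StronglyConvexFun σ (f j)) (hf : ∀ j, ContDiff ℝ 2 (f j))
    (hLip : ∀ j y z, ‖gradient (f j) y - gradient (f j) z‖ ≤ L * ‖y - z‖)
    (hg : ∀ j, ConvexOn ℝ Set.univ (g j)) (hL : 0 < L) {β : ℝ} (hβ : β ≤ 1)
    {x d : EuclideanSpace ℝ (Fin n)} (hmin : ∀ d', Qmax f g x d ≤ Qmax f g x d') {s : ℝ}
    (hs0 : 0 ≤ s) (hs1 : s ≤ 1) (hs : s ≤ σ * (2 - β) / L) (j : Fin (m + 1)) :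
    F j (x + s • d) ≤ F j x + β * s * Qmax f g x d := by
  have hdesc := apply_add_smul_le_of_Qmax hF hsc hf hLip hg x d hs0 hs1 j
  have ht := Qmax_le_neg_of_isMin hsc hf hg hmin
  have hLs : L * s ≤ σ * (2 - β) := by rwa [le_div_iff₀ hL, mul_comm] at hs
  have hD := sq_nonneg ‖d‖
  nlinarith [mul_le_mul_of_nonneg_left ht (mul_nonneg hs0 (sub_nonneg.2 hβ)),
    mul_le_mul_of_nonneg_right hLs (mul_nonneg hs0 hD)]

theorem continuous_Qmax (hf : ∀ j, ContDiff ℝ 2 (f j)) (hg : ∀ j, Continuous (g j))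
    (d : EuclideanSpace ℝ (Fin n)) :
    Continuous fun x => Qmax f g x d := by
  refine Continuous.finset_sup'_apply _ fun j _ => ?_
  have hgrad := (hf j).gradient (l := 1) le_rfl
  have hH : Continuous fun x => fderiv ℝ (gradient (f j)) x :=
    hgrad.continuous_fderiv one_ne_zero
  simp only [Qj]
  fun_prop

theorem tendsto_Qj_smul_div (hF : ∀ j y, F j y = f j y + g j y) {j : Fin (m + 1)}
    {x d : EuclideanSpace ℝ (Fin n)} (hf : DifferentiableAt ℝ (f j) x) {c : ℝ}
    (hc : HasDirDeriv (F j) x d c) :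
    Tendsto (fun s => Qj f g j x (s • d) / s) (𝓝[>] 0) (𝓝 c) := by
  have hquad : Tendsto (fun s : ℝ => s * (1 / 2 * ⟪fderiv ℝ (gradient (f j)) x d, d⟫)) (𝓝[>] 0)
      (𝓝 0) :=
    ((continuous_mul_const _).tendsto' 0 0 (zero_mul _)).mono_left nhdsWithin_le_nhds
  have hlim := ((hc.sub (hf.hasDirDeriv d)).add hquad).const_add ⟪gradient (f j) x, d⟫
  rw [add_zero, add_sub_cancel] at hlim
  refine hlim.congr' ?_
  filter_upwards [self_mem_nhdsWithin] with s (hs : 0 < s)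
  simp only [Qj, hF, map_smul, real_inner_smul_left, real_inner_smul_right]
  field_simp
  ring

theorem sup'_nonneg_of_forall_Qmax_nonneg (hF : ∀ j y, F j y = f j y + g j y)
    {x : EuclideanSpace ℝ (Fin n)} (hf : ∀ j, DifferentiableAt ℝ (f j) x)
    {d : EuclideanSpace ℝ (Fin n)} {c : Fin (m + 1) → ℝ} (hc : ∀ j, HasDirDeriv (F j) x d (c j))
    (hQ : ∀ d', 0 ≤ Qmax f g x d') :
    0 ≤ Finset.univ.sup' Finset.univ_nonempty c := by
  have hlim : Tendsto (fun s : ℝ => Finset.univ.sup' Finset.univ_nonempty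
      fun j => Qj f g j x (s • d) / s) (𝓝[>] 0) (𝓝 (Finset.univ.sup' Finset.univ_nonempty c)) :=
    Tendsto.finset_sup'_nhds_apply _ fun j _ => tendsto_Qj_smul_div hF (hf j) (hc j)
  refine ge_of_tendsto hlim ?_
  filter_upwards [self_mem_nhdsWithin] with s (hs : 0 < s)
  rw [← Finset.sup'_div₀ hs.le]
  exact div_nonneg (hQ _) hs.le

end Subproblem

section Backtracking

variable {V ι : Type*} [AddCommMonoid V] [Module ℝ V]

def IsArmijoBacktracking (r β : ℝ) (F : ι → V → ℝ) (x d : V) (t α : ℝ) : Prop :=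
  ∃ N : ℕ, α = r ^ N ∧ (∀ j, F j (x + α • d) ≤ F j x + β * α * t) ∧
    ∀ i < N, ¬ ∀ j, F j (x + r ^ i • d) ≤ F j x + β * r ^ i * t

variable {r β : ℝ} {F : ι → V → ℝ} {x d : V} {t α : ℝ}

theorem IsArmijoBacktracking.armijo (h : IsArmijoBacktracking r β F x d t α) (j : ι) :
    F j (x + α • d) ≤ F j x + β * α * t := by
  obtain ⟨N, -, harmijo, -⟩ := h
  exact harmijo j

theorem IsArmijoBacktracking.min_le (h : IsArmijoBacktracking r β F x d t α) (hr0 : 0 < r)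
    (hr1 : r ≤ 1) {s₀ : ℝ}
    (hpass : ∀ s, 0 ≤ s → s ≤ 1 → s ≤ s₀ → ∀ j, F j (x + s • d) ≤ F j x + β * s * t) :
    min 1 (r * s₀) ≤ α := by
  obtain ⟨N, rfl, -, hfail⟩ := h
  cases N with
  | zero => simp
  | succ N =>
    have hs₀ : s₀ < r ^ N := by
      by_contra! hle
      exact hfail N N.lt_succ_self
        (hpass _ (pow_nonneg hr0.le N) (pow_le_one₀ hr0.le hr1) hle)
    calc min 1 (r * s₀) ≤ r * s₀ := min_le_right _ _
      _ ≤ r ^ (N + 1) := by rw [pow_succ']; gcongr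

end Backtracking

theorem tendsto_zero_of_sufficient_decrease {a α t : ℕ → ℝ} {β c a₀ : ℝ} (hβ : 0 < β)
    (hc : 0 < c) (hα : ∀ k, c ≤ α k) (ht : ∀ k, t k ≤ 0)
    (hdec : ∀ k, a (k + 1) ≤ a k + β * α k * t k) {φ : ℕ → ℕ} (hφ : StrictMono φ)
    (ha : Tendsto (a ∘ φ) atTop (𝓝 a₀)) : Tendsto t atTop (𝓝 0) := by
  have hanti : Antitone a := antitone_nat_of_succ_le fun k => by
    nlinarith [hdec k, mul_nonneg hβ.le (hc.le.trans (hα k)), ht k]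
  have hconv := (tendsto_iff_tendsto_subseq_of_antitone hanti hφ.tendsto_atTop).2 ha
  have hgap : Tendsto (fun k => (a (k + 1) - a k) / (β * c)) atTop (𝓝 0) := by
    simpa using ((hconv.comp (tendsto_add_atTop_nat 1)).sub hconv).div_const (β * c)
  refine tendsto_of_tendsto_of_tendsto_of_le_of_le hgap tendsto_const_nhds (fun k => ?_) ht
  rw [div_le_iff₀ (by positivity)]
  nlinarith [hdec k, mul_le_mul_of_nonpos_right (hα k) (ht k)]

theorem global_convergence_to_critical_general {n m : ℕ} (σ L : ℝ) (hσ : 0 < σ) (hL : 0 < L)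
    (r β : ℝ) (hr0 : 0 < r) (hr1 : r < 1) (hβ0 : 0 < β) (hβ1 : β < 1)
    (f g F : Fin (m + 1) → EuclideanSpace ℝ (Fin n) → ℝ)
    (hfsc : ∀ j, StronglyConvexFun σ (f j))
    (hfC2 : ∀ j, ContDiff ℝ 2 (f j))
    (hLip : ∀ j (y z : EuclideanSpace ℝ (Fin n)),
      ‖gradient (f j) y - gradient (f j) z‖ ≤ L * ‖y - z‖)
    (hgconv : ∀ j, ConvexOn ℝ Set.univ (g j))
    (hgcont : ∀ j, Continuous (g j))
    (hF : ∀ j y, F j y = f j y + g j y)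
    (xseq dseq : ℕ → EuclideanSpace ℝ (Fin n)) (tseq alphaseq : ℕ → ℝ)
    (hdmin : ∀ k d, Qmax f g (xseq k) (dseq k) ≤ Qmax f g (xseq k) d)
    (ht : ∀ k, tseq k = Qmax f g (xseq k) (dseq k))
    (halpha : ∀ k, ∃ N : ℕ, alphaseq k = r ^ N ∧
      (∀ j, F j (xseq k + alphaseq k • dseq k) ≤ F j (xseq k) + β * alphaseq k * tseq k) ∧
      (∀ i < N, ¬ ∀ j, F j (xseq k + r ^ i • dseq k) ≤ F j (xseq k) + β * r ^ i * tseq k))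
    (hupd : ∀ k, xseq (k + 1) = xseq k + alphaseq k • dseq k)
    (F' : EuclideanSpace ℝ (Fin n) → Fin (m + 1) → EuclideanSpace ℝ (Fin n) → ℝ)
    (hF' : ∀ x j d, HasDirDeriv (F j) x d (F' x j d)) :
    ∀ xstar : EuclideanSpace ℝ (Fin n),
      (∃ φ : ℕ → ℕ, StrictMono φ ∧ Tendsto (xseq ∘ φ) atTop (nhds xstar)) →
      ∀ d : EuclideanSpace ℝ (Fin n),
        0 ≤ Finset.univ.sup' Finset.univ_nonempty (fun j => F' xstar j d) := by
  rintro xstar ⟨φ, hφ, hlim⟩ d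
  have hstep : ∀ k, IsArmijoBacktracking r β F (xseq k) (dseq k) (tseq k) (alphaseq k) := halpha
  have hα : ∀ k, min 1 (r * (σ * (2 - β) / L)) ≤ alphaseq k := fun k =>
    (hstep k).min_le hr0 hr1.le fun s hs0 hs1 hs j => by
      rw [ht k]
      exact armijo_of_le hF hfsc hfC2 hLip hgconv hL hβ1.le (hdmin k) hs0 hs1 hs j
  have htk : ∀ k, tseq k ≤ 0 := fun k => (ht k).trans_le ((hdmin k 0).trans_eq (Qmax_zero _))
  have hdec : ∀ k, F 0 (xseq (k + 1)) ≤ F 0 (xseq k) + β * alphaseq k * tseq k := fun k =>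
    hupd k ▸ (hstep k).armijo 0
  have hFcont : Continuous (F 0) :=
    ((hfC2 0).continuous.add (hgcont 0)).congr fun y => (hF 0 y).symm
  have hc : 0 < min 1 (r * (σ * (2 - β) / L)) := by
    have : 0 < 2 - β := by linarith
    positivity
  have ht0 : Tendsto tseq atTop (𝓝 0) := tendsto_zero_of_sufficient_decrease
    (a := fun k => F 0 (xseq k)) hβ0 hc hα htk hdec hφ ((hFcont.tendsto xstar).comp hlim)
  have hQ : ∀ d', 0 ≤ Qmax f g xstar d' := fun d' =>
    le_of_tendsto_of_tendsto' (ht0.comp hφ.tendsto_atTop)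
      (((continuous_Qmax hfC2 hgcont d').tendsto xstar).comp hlim)
      fun l => (ht (φ l)).trans_le (hdmin (φ l) d')
  exact sup'_nonneg_of_forall_Qmax_nonneg hF (fun j => (hfC2 j).differentiable two_ne_zero _)
    (fun j => hF' xstar j d) hQ

/-- global convergence: let `x^{k+1} = x^k + α_k d^k`, where `d^k` is the
unique global minimizer of `d ↦ Q(x^k,d)`, `t^k = Q(x^k,d^k)`, and `α_k` is the largest
element of `{1, r, r², …}` (`r ∈ (0,1)`) satisfying the Armijo condition
`F_j(x^k + α_k d^k) ≤ F_j(x^k) + β α_k t^k` for all `j` (`β ∈ (0,1)`). If each `f_j` is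
`σ`-strongly convex, each `∇f_j` is `L`-Lipschitz, and the level set
`M = {x : F_j(x) ≤ F_j(x^0) ∀ j}` is bounded, then every accumulation point `x*` of `{x^k}`
is a critical point: `max_j F_j'(x*; d) ≥ 0` for every direction `d`. Here `F_j = f_j + g_j`. -/
theorem global_convergence_to_critical {n m : ℕ} (σ L : ℝ) (hσ : 0 < σ) (hL : 0 < L)
    (r β : ℝ) (hr0 : 0 < r) (hr1 : r < 1) (hβ0 : 0 < β) (hβ1 : β < 1)
    (f g F : Fin (m + 1) → EuclideanSpace ℝ (Fin n) → ℝ)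
    (hfsc : ∀ j, StronglyConvexFun σ (f j))
    (hfC2 : ∀ j, ContDiff ℝ 2 (f j))
    (hLip : ∀ j (y z : EuclideanSpace ℝ (Fin n)),
      ‖gradient (f j) y - gradient (f j) z‖ ≤ L * ‖y - z‖)
    (hgconv : ∀ j, ConvexOn ℝ Set.univ (g j))
    (hgcont : ∀ j, Continuous (g j))
    (hF : ∀ j y, F j y = f j y + g j y)
    (xseq dseq : ℕ → EuclideanSpace ℝ (Fin n)) (tseq alphaseq : ℕ → ℝ)
    (hdmin : ∀ k d, Qmax f g (xseq k) (dseq k) ≤ Qmax f g (xseq k) d)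
    (hduniq : ∀ k d, (∀ d', Qmax f g (xseq k) d ≤ Qmax f g (xseq k) d') → d = dseq k)
    (ht : ∀ k, tseq k = Qmax f g (xseq k) (dseq k))
    (halpha : ∀ k, ∃ N : ℕ, alphaseq k = r ^ N ∧
      (∀ j, F j (xseq k + alphaseq k • dseq k) ≤ F j (xseq k) + β * alphaseq k * tseq k) ∧
      (∀ i < N, ¬ ∀ j, F j (xseq k + r ^ i • dseq k) ≤ F j (xseq k) + β * r ^ i * tseq k))
    (hupd : ∀ k, xseq (k + 1) = xseq k + alphaseq k • dseq k)
    (hlevel : Bornology.IsBounded {x : EuclideanSpace ℝ (Fin n) | ∀ j, F j x ≤ F j (xseq 0)})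
    (F' : EuclideanSpace ℝ (Fin n) → Fin (m + 1) → EuclideanSpace ℝ (Fin n) → ℝ)
    (hF' : ∀ x j d, HasDirDeriv (F j) x d (F' x j d)) :
    ∀ xstar : EuclideanSpace ℝ (Fin n),
      (∃ φ : ℕ → ℕ, StrictMono φ ∧ Tendsto (xseq ∘ φ) atTop (nhds xstar)) →
      ∀ d : EuclideanSpace ℝ (Fin n),
        0 ≤ Finset.univ.sup' Finset.univ_nonempty (fun j => F' xstar j d) :=
  global_convergence_to_critical_general σ L hσ hL r β hr0 hr1 hβ0 hβ1 f g F hfsc hfC2 hLip hgconv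
    hgcont hF xseq dseq tseq alphaseq hdmin ht halpha hupd F' hF'
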